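/- The Banach space l(r,s,t,p;Δ) with 1 < p_n ≤ M and the Luxemburg norm has the Kadec–Klee property: if ‖x‖ = 1, ‖x^m‖ → 1, and x^m → x weakly, then ‖x^m − x‖ → 0. -/

import Mathlib

open Finset Filter Topology ENNReal

/-- The difference operator `Δ` with the convention `x₋₁ = 0`. -/
def del (x : ℕ → ℝ) (k : ℕ) : ℝ :=
  x k - if k = 0 then 0 else x (k - 1)

/-- The generalized-means-of-differences transform `(A(r,s,t)·Δ)x`. -/
noncomputable def Amap (r s t : ℕ → ℝ) (x : ℕ → ℝ) (n : ℕ) : ℝ :=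
  (1 / r n) * ∑ k ∈ Finset.range (n + 1), s (n - k) * t k * del x k

/-- The modular `σ_p` on `l(r,s,t,p;Δ)`, with values in `[0,∞]`. -/
noncomputable def sigmaP (r s t p : ℕ → ℝ) (x : ℕ → ℝ) : ℝ≥0∞ :=
  ∑' n, ENNReal.ofReal (|Amap r s t x n| ^ p n)

/-- The space `l(r,s,t,p;Δ)`. -/
def lrstp (r s t p : ℕ → ℝ) : Set (ℕ → ℝ) :=
  {x | sigmaP r s t p x < ⊤}

/-- The paranorm `h̃` on `l(r,s,t,p;Δ)`. -/
noncomputable def htilde (r s t p : ℕ → ℝ) (M : ℝ) (x : ℕ → ℝ) : ℝ :=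
  ((sigmaP r s t p x).toReal) ^ (1 / M)

/-- The Luxemburg norm on `l(r,s,t,p;Δ)`. -/
noncomputable def lux (r s t p : ℕ → ℝ) (x : ℕ → ℝ) : ℝ :=
  sInf {c : ℝ | 0 < c ∧ sigmaP r s t p (c⁻¹ • x) ≤ 1}

/-!
Each coordinate `z ↦ (A(r,s,t)Δz)ₙ` is a linear functional of Luxemburg norm at most `1`, so weak
convergence gives `A xᵐ → A x` coordinatewise. Since `1 < pₙ ≤ M`, the Luxemburg norm and the
modular control each other near the unit sphere (`σ(z) ≤ c^M` if `‖z‖ < c` with `1 ≤ c`, and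
`‖z‖ ≤ c` if `σ(z) ≤ c^M` with `c ≤ 1`), hence `σ(x) = 1` and `σ(xᵐ) → 1`. The terms
`|A xᵐ - A x|^pₙ` tend to `0` and are dominated by `2^M (|A xᵐ|^pₙ + |A x|^pₙ)`, whose sums
converge to the sum of their pointwise limits; dominated convergence with converging dominants
then gives `σ(xᵐ - x) → 0`, i.e. `‖xᵐ - x‖ → 0`.
-/

lemma abs_sub_rpow_le {u v q M : ℝ} (hq : 0 ≤ q) (hqM : q ≤ M) :
    |u - v| ^ q ≤ 2 ^ M * (|u| ^ q + |v| ^ q) :=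
  calc |u - v| ^ q ≤ (2 * max |u| |v|) ^ q := by
        gcongr
        rw [two_mul]
        exact (abs_sub _ _).trans (add_le_add (le_max_left _ _) (le_max_right _ _))
    _ = 2 ^ q * max (|u| ^ q) (|v| ^ q) := by
        rw [Real.mul_rpow zero_le_two (by positivity),
          Real.rpow_max (abs_nonneg _) (abs_nonneg _) hq]
    _ ≤ 2 ^ M * (|u| ^ q + |v| ^ q) :=
        mul_le_mul (Real.rpow_le_rpow_of_exponent_le one_le_two hqM)
          (max_le_add_of_nonneg (by positivity) (by positivity)) (by positivity) (by positivity)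

theorem tendsto_tsum_zero_of_le_of_tendsto_tsum {α β : Type*} {l : Filter α}
    {d h : α → β → ℝ} {g : β → ℝ} (hd0 : ∀ m n, 0 ≤ d m n) (hdh : ∀ m n, d m n ≤ h m n)
    (hh : ∀ m, Summable (h m)) (hg : Summable g) (hd : ∀ n, Tendsto (d · n) l (𝓝 0))
    (hhg : ∀ n, Tendsto (h · n) l (𝓝 (g n)))
    (hsum : Tendsto (fun m => ∑' n, h m n) l (𝓝 (∑' n, g n))) :
    Tendsto (fun m => ∑' n, d m n) l (𝓝 0) := by
  -- `e m` is dominated by the fixed summable `|g|` and tends to `g`, while `d m ≤ h m - e m`.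
  set e : α → β → ℝ := fun m n => min (h m n - d m n) (g n)
  have he_bound : ∀ m n, ‖e m n‖ ≤ |g n| := fun m n => by
    rw [Real.norm_eq_abs, abs_le]
    exact ⟨le_min (by linarith [hdh m n, abs_nonneg (g n)]) (neg_abs_le _),
      (min_le_right _ _).trans (le_abs_self _)⟩
  have he_summ : ∀ m, Summable (e m) := fun m => Summable.of_norm_bounded hg.abs (he_bound m)
  have he : Tendsto (fun m => ∑' n, e m n) l (𝓝 (∑' n, g n)) :=
    tendsto_tsum_of_dominated_convergence hg.abs
      (fun n => by simpa [e] using ((hhg n).sub (hd n)).min (tendsto_const_nhds (x := g n)))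
      (Eventually.of_forall he_bound)
  have hd_le : ∀ m, ∑' n, d m n ≤ ∑' n, h m n - ∑' n, e m n := fun m => by
    rw [← (hh m).tsum_sub (he_summ m)]
    exact Summable.tsum_le_tsum (fun n => by linarith [min_le_left (h m n - d m n) (g n)])
      (Summable.of_nonneg_of_le (hd0 m) (hdh m) (hh m)) ((hh m).sub (he_summ m))
  exact tendsto_of_tendsto_of_tendsto_of_le_of_le tendsto_const_nhds
    (by simpa using hsum.sub he) (fun m => tsum_nonneg (hd0 m)) hd_le

noncomputable def coordAmap (r s t : ℕ → ℝ) (n : ℕ) : (ℕ → ℝ) →ₗ[ℝ] ℝ where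
  toFun z := Amap r s t z n
  map_add' y z := by
    simp only [Amap, ← mul_add, ← sum_add_distrib]
    congr 1
    refine sum_congr rfl fun k _ => ?_
    simp only [del, Pi.add_apply]
    split_ifs <;> ring
  map_smul' c z := by
    simp only [Amap, RingHom.id_apply, smul_eq_mul]
    rw [mul_left_comm c, mul_sum _ _ c]
    congr 1
    refine sum_congr rfl fun k _ => ?_
    simp only [del, Pi.smul_apply, smul_eq_mul]
    split_ifs <;> ring

section Luxemburg

variable {r s t p : ℕ → ℝ} {M : ℝ}

lemma Amap_sub (x y : ℕ → ℝ) (n : ℕ) :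
    Amap r s t (x - y) n = Amap r s t x n - Amap r s t y n :=
  map_sub (coordAmap r s t n) x y

lemma Amap_smul (c : ℝ) (x : ℕ → ℝ) (n : ℕ) : Amap r s t (c • x) n = c * Amap r s t x n :=
  map_smul (coordAmap r s t n) c x

lemma toReal_sigmaP (z : ℕ → ℝ) :
    (sigmaP r s t p z).toReal = ∑' n, |Amap r s t z n| ^ p n := by
  rw [sigmaP, ENNReal.tsum_toReal_eq fun _ => ENNReal.ofReal_ne_top]
  exact tsum_congr fun n => ENNReal.toReal_ofReal (by positivity)

lemma summable_of_mem_lrstp {z : ℕ → ℝ} (hz : z ∈ lrstp r s t p) :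
    Summable fun n => |Amap r s t z n| ^ p n :=
  (ENNReal.summable_toReal hz.ne).congr fun n => ENNReal.toReal_ofReal (by positivity)

lemma sigmaP_smul_le (z : ℕ → ℝ) {a b : ℝ} (hab : ∀ n, |a| ^ p n ≤ b) :
    sigmaP r s t p (a • z) ≤ ENNReal.ofReal b * sigmaP r s t p z := by
  rw [sigmaP, sigmaP, ← ENNReal.tsum_mul_left]
  refine ENNReal.tsum_le_tsum fun n => ?_
  rw [← ENNReal.ofReal_mul ((Real.rpow_nonneg (abs_nonneg a) _).trans (hab n))]
  refine ENNReal.ofReal_le_ofReal ?_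
  rw [Amap_smul, abs_mul, Real.mul_rpow (abs_nonneg _) (abs_nonneg _)]
  exact mul_le_mul_of_nonneg_right (hab n) (by positivity)

lemma lux_nonneg (z : ℕ → ℝ) : 0 ≤ lux r s t p z :=
  Real.sInf_nonneg fun _ hc => hc.1.le

lemma lux_le_of_sigmaP_inv_smul_le_one {z : ℕ → ℝ} {c : ℝ} (hc : 0 < c)
    (h : sigmaP r s t p (c⁻¹ • z) ≤ 1) : lux r s t p z ≤ c :=
  csInf_le ⟨0, fun _ hd => hd.1.le⟩ ⟨hc, h⟩

lemma sigmaP_inv_smul_le_one_of_lux_lt (hp : ∀ n, 1 ≤ p n) {z : ℕ → ℝ}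
    (hz : z ∈ lrstp r s t p) {c : ℝ} (hc : lux r s t p z < c) :
    sigmaP r s t p (c⁻¹ • z) ≤ 1 := by
  have shrink : ∀ w {a : ℝ}, 0 ≤ a → a ≤ 1 →
      sigmaP r s t p (a • w) ≤ ENNReal.ofReal a * sigmaP r s t p w := fun w a ha0 ha1 =>
    sigmaP_smul_le w fun n => by
      rw [abs_of_nonneg ha0]; exact Real.rpow_le_self_of_le_one ha0 ha1 (hp n)
  set c₀ := (sigmaP r s t p z).toReal + 1
  have hc₀ : 0 < c₀ := by positivity
  have hne : {c : ℝ | 0 < c ∧ sigmaP r s t p (c⁻¹ • z) ≤ 1}.Nonempty := by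
    refine ⟨c₀, hc₀, ?_⟩
    calc sigmaP r s t p (c₀⁻¹ • z) ≤ ENNReal.ofReal c₀⁻¹ * sigmaP r s t p z :=
          shrink z (inv_nonneg.2 hc₀.le) (inv_le_one_of_one_le₀ (by simp [c₀]))
      _ ≤ ENNReal.ofReal c₀⁻¹ * ENNReal.ofReal c₀ := by
          rw [← ENNReal.ofReal_toReal hz.ne]
          gcongr
          simp [c₀]
      _ = 1 := by
          rw [← ENNReal.ofReal_mul (by positivity), inv_mul_cancel₀ hc₀.ne', ENNReal.ofReal_one]
  obtain ⟨c₁, ⟨hc₁, hσ₁⟩, hc₁c⟩ := exists_lt_of_csInf_lt hne hc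
  have hc0 : 0 < c := hc₁.trans hc₁c
  calc sigmaP r s t p (c⁻¹ • z) = sigmaP r s t p ((c₁ / c) • c₁⁻¹ • z) := by
        rw [smul_smul, div_mul_eq_mul_div, mul_inv_cancel₀ hc₁.ne', one_div]
    _ ≤ ENNReal.ofReal (c₁ / c) * sigmaP r s t p (c₁⁻¹ • z) :=
        shrink _ (by positivity) ((div_le_one hc0).2 hc₁c.le)
    _ ≤ 1 * 1 := mul_le_mul' (ENNReal.ofReal_le_one.2 ((div_le_one hc0).2 hc₁c.le)) hσ₁
    _ = 1 := one_mul 1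

lemma abs_Amap_le_lux (hp : ∀ n, 1 ≤ p n) {z : ℕ → ℝ} (hz : z ∈ lrstp r s t p) (n : ℕ) :
    |Amap r s t z n| ≤ lux r s t p z := by
  refine le_of_forall_gt_imp_ge_of_dense fun c hc => ?_
  have hc0 : 0 < c := (lux_nonneg z).trans_lt hc
  have hterm : |Amap r s t (c⁻¹ • z) n| ^ p n ≤ 1 := ENNReal.ofReal_le_one.1 <|
    (ENNReal.le_tsum n).trans (sigmaP_inv_smul_le_one_of_lux_lt hp hz hc)
  have hle : c⁻¹ * |Amap r s t z n| ≤ 1 := by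
    rw [Amap_smul, abs_mul, abs_inv, abs_of_pos hc0] at hterm
    exact not_lt.1 fun h => (Real.one_lt_rpow h (by linarith [hp n])).not_ge hterm
  simpa using (inv_mul_le_iff₀ hc0).1 hle

lemma lux_le_of_sigmaP_le_rpow (hpM : ∀ n, p n ≤ M) {z : ℕ → ℝ} {c : ℝ} (hc0 : 0 < c)
    (hc1 : c ≤ 1) (h : sigmaP r s t p z ≤ ENNReal.ofReal (c ^ M)) : lux r s t p z ≤ c := by
  refine lux_le_of_sigmaP_inv_smul_le_one hc0 ?_
  calc sigmaP r s t p (c⁻¹ • z) ≤ ENNReal.ofReal (c⁻¹ ^ M) * sigmaP r s t p z :=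
        sigmaP_smul_le z fun n => by
          rw [abs_of_pos (inv_pos.2 hc0)]
          exact Real.rpow_le_rpow_of_exponent_le ((one_le_inv₀ hc0).2 hc1) (hpM n)
    _ ≤ ENNReal.ofReal (c⁻¹ ^ M) * ENNReal.ofReal (c ^ M) := by gcongr
    _ = 1 := by
        rw [← ENNReal.ofReal_mul (by positivity), ← Real.mul_rpow (by positivity) hc0.le,
          inv_mul_cancel₀ hc0.ne', Real.one_rpow, ENNReal.ofReal_one]

lemma sigmaP_le_rpow_of_lux_lt (hp : ∀ n, 1 ≤ p n) (hpM : ∀ n, p n ≤ M) {z : ℕ → ℝ}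
    (hz : z ∈ lrstp r s t p) {c : ℝ} (hc1 : 1 ≤ c) (hc : lux r s t p z < c) :
    sigmaP r s t p z ≤ ENNReal.ofReal (c ^ M) :=
  calc sigmaP r s t p z = sigmaP r s t p (c • c⁻¹ • z) := by
        rw [smul_inv_smul₀ (by positivity : c ≠ 0)]
    _ ≤ ENNReal.ofReal (c ^ M) * sigmaP r s t p (c⁻¹ • z) :=
        sigmaP_smul_le _ fun n => by
          rw [abs_of_pos (by positivity)]
          exact Real.rpow_le_rpow_of_exponent_le hc1 (hpM n)
    _ ≤ ENNReal.ofReal (c ^ M) :=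
        mul_le_of_le_one_right' (sigmaP_inv_smul_le_one_of_lux_lt hp hz hc)

variable {α : Type*} {l : Filter α}

lemma tendsto_sigmaP_of_tendsto_lux (hp : ∀ n, 1 ≤ p n) (hpM : ∀ n, p n ≤ M)
    {z : α → ℕ → ℝ} (hz : ∀ m, z m ∈ lrstp r s t p)
    (h : Tendsto (fun m => lux r s t p (z m)) l (𝓝 1)) :
    Tendsto (fun m => sigmaP r s t p (z m)) l (𝓝 1) := by
  have hpow : Tendsto (fun c : ℝ => ENNReal.ofReal (c ^ M)) (𝓝 1) (𝓝 1) := by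
    simpa using ENNReal.tendsto_ofReal (Real.continuousAt_rpow_const 1 M (Or.inl one_ne_zero))
  rw [tendsto_order]
  constructor
  · intro a ha
    obtain ⟨c, hac, hc0, hc1⟩ : ∃ c, a < ENNReal.ofReal (c ^ M) ∧ 0 < c ∧ c < 1 :=
      (((hpow.mono_left nhdsWithin_le_nhds).eventually (lt_mem_nhds ha)).and
        (Ioo_mem_nhdsLT zero_lt_one)).exists
    filter_upwards [h.eventually (lt_mem_nhds hc1)] with m hm
    exact hac.trans (not_le.1 fun hσ => (lux_le_of_sigmaP_le_rpow hpM hc0 hc1.le hσ).not_gt hm)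
  · intro b hb
    obtain ⟨c, hcb, hc1⟩ : ∃ c, ENNReal.ofReal (c ^ M) < b ∧ 1 < c :=
      (((hpow.mono_left nhdsWithin_le_nhds).eventually (gt_mem_nhds hb)).and
        (self_mem_nhdsWithin (s := Set.Ioi 1))).exists
    filter_upwards [h.eventually (gt_mem_nhds hc1)] with m hm
    exact (sigmaP_le_rpow_of_lux_lt hp hpM (hz m) hc1.le hm).trans_lt hcb

lemma tendsto_lux_zero_of_tendsto_sigmaP (hpM : ∀ n, p n ≤ M) {z : α → ℕ → ℝ}
    (h : Tendsto (fun m => sigmaP r s t p (z m)) l (𝓝 0)) :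
    Tendsto (fun m => lux r s t p (z m)) l (𝓝 0) := by
  rw [tendsto_order]
  refine ⟨fun a ha => Eventually.of_forall fun m => ha.trans_le (lux_nonneg _), fun b hb => ?_⟩
  have hc0 : 0 < min (b / 2) 1 := by positivity
  filter_upwards [h.eventually (gt_mem_nhds (ENNReal.ofReal_pos.2 (Real.rpow_pos_of_pos hc0 M)))]
    with m hm
  exact (lux_le_of_sigmaP_le_rpow hpM hc0 (min_le_right _ _) hm.le).trans_lt
    ((min_le_left _ _).trans_lt (half_lt_self hb))

theorem tendsto_sigmaP_sub_zero (hp : ∀ n, 0 < p n) (hpM : ∀ n, p n ≤ M) {x : ℕ → ℝ}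
    {xs : α → ℕ → ℝ} (hx : x ∈ lrstp r s t p) (hxs : ∀ m, xs m ∈ lrstp r s t p)
    (hcoord : ∀ n, Tendsto (fun m => Amap r s t (xs m) n) l (𝓝 (Amap r s t x n)))
    (hσ : Tendsto (fun m => sigmaP r s t p (xs m)) l (𝓝 (sigmaP r s t p x))) :
    Tendsto (fun m => sigmaP r s t p (xs m - x)) l (𝓝 0) := by
  set a : ℕ → ℝ := fun n => |Amap r s t x n| ^ p n
  set as : α → ℕ → ℝ := fun m n => |Amap r s t (xs m) n| ^ p n
  set d : α → ℕ → ℝ := fun m n => |Amap r s t (xs m) n - Amap r s t x n| ^ p n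
  have ha : Summable a := summable_of_mem_lrstp hx
  have has : ∀ m, Summable (as m) := fun m => summable_of_mem_lrstp (hxs m)
  have hd_le : ∀ m n, d m n ≤ 2 ^ M * (as m n + a n) := fun m n =>
    abs_sub_rpow_le (hp n).le (hpM n)
  have hd_summ : ∀ m, Summable (d m) := fun m =>
    Summable.of_nonneg_of_le (fun n => by positivity) (hd_le m) (((has m).add ha).mul_left _)
  have hsum : Tendsto (fun m => ∑' n, as m n) l (𝓝 (∑' n, a n)) := by
    simpa only [Function.comp_def, toReal_sigmaP] using (ENNReal.tendsto_toReal hx.ne).comp hσ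
  have hd : Tendsto (fun m => ∑' n, d m n) l (𝓝 0) := by
    refine tendsto_tsum_zero_of_le_of_tendsto_tsum (g := fun n => 2 ^ M * (a n + a n))
      (fun m n => by positivity) hd_le (fun m => ((has m).add ha).mul_left _)
      ((ha.add ha).mul_left _) (fun n => ?_) (fun n => ?_) ?_
    · simpa [Real.zero_rpow (hp n).ne'] using
        ((hcoord n).sub_const (Amap r s t x n)).abs.rpow_const (Or.inr (hp n).le)
    · exact ((((hcoord n).abs.rpow_const (Or.inr (hp n).le)).add_const _).const_mul _)
    · simp only [tsum_mul_left]
      rw [ha.tsum_add ha]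
      exact ((hsum.add_const _).congr fun m => ((has m).tsum_add ha).symm).const_mul _
  have hσd : ∀ m, sigmaP r s t p (xs m - x) = ENNReal.ofReal (∑' n, d m n) := fun m => by
    rw [sigmaP, ENNReal.ofReal_tsum_of_nonneg (fun n => by positivity) (hd_summ m)]
    simp only [d, Amap_sub]
  simpa [hσd] using ENNReal.tendsto_ofReal hd

end Luxemburg

theorem lrstp_kadec_klee_general
    (r s t p : ℕ → ℝ)
    (M : ℝ) (hp : ∀ n, 1 < p n) (hpM : ∀ n, p n ≤ M)
    (x : ℕ → ℝ) (hx : x ∈ lrstp r s t p) (hx1 : lux r s t p x = 1)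
    (xs : ℕ → ℕ → ℝ) (hxs : ∀ m, xs m ∈ lrstp r s t p)
    (hnorm : Tendsto (fun m => lux r s t p (xs m)) atTop (𝓝 1))
    -- weak convergence: every norm-bounded linear functional on the space
    -- converges along the sequence
    (hweak : ∀ f : (ℕ → ℝ) →ₗ[ℝ] ℝ,
      (∃ C : ℝ, ∀ z ∈ lrstp r s t p, |f z| ≤ C * lux r s t p z) →
      Tendsto (fun m => f (xs m)) atTop (𝓝 (f x))) :
    Tendsto (fun m => lux r s t p (xs m - x)) atTop (𝓝 0) := by
  have hp1 : ∀ n, 1 ≤ p n := fun n => (hp n).le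
  have hcoord : ∀ n, Tendsto (fun m => Amap r s t (xs m) n) atTop (𝓝 (Amap r s t x n)) :=
    fun n => hweak (coordAmap r s t n) ⟨1, fun z hz => by rw [one_mul]; exact abs_Amap_le_lux hp1 hz n⟩
  have hσx : sigmaP r s t p x = 1 := tendsto_const_nhds_iff.1 <|
    tendsto_sigmaP_of_tendsto_lux (l := (atTop : Filter ℕ)) hp1 hpM (fun _ => hx) (by simp [hx1])
  have hσ := tendsto_sigmaP_of_tendsto_lux hp1 hpM hxs hnorm
  rw [← hσx] at hσ
  exact tendsto_lux_zero_of_tendsto_sigmaP hpM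
    (tendsto_sigmaP_sub_zero (fun n => zero_lt_one.trans (hp n)) hpM hx hxs hcoord hσ)

theorem lrstp_kadec_klee
    (r s t p : ℕ → ℝ) (hr : ∀ n, r n ≠ 0) (ht : ∀ n, t n ≠ 0) (hs0 : s 0 ≠ 0)
    (M : ℝ) (hp : ∀ n, 1 < p n) (hpM : ∀ n, p n ≤ M)
    (x : ℕ → ℝ) (hx : x ∈ lrstp r s t p) (hx1 : lux r s t p x = 1)
    (xs : ℕ → ℕ → ℝ) (hxs : ∀ m, xs m ∈ lrstp r s t p)
    (hnorm : Tendsto (fun m => lux r s t p (xs m)) atTop (𝓝 1))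
    -- weak convergence: every norm-bounded linear functional on the space
    -- converges along the sequence
    (hweak : ∀ f : (ℕ → ℝ) →ₗ[ℝ] ℝ,
      (∃ C : ℝ, ∀ z ∈ lrstp r s t p, |f z| ≤ C * lux r s t p z) →
      Tendsto (fun m => f (xs m)) atTop (𝓝 (f x))) :
    Tendsto (fun m => lux r s t p (xs m - x)) atTop (𝓝 0) :=
  lrstp_kadec_klee_general r s t p M hp hpM x hx hx1 xs hxs hnorm hweak
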